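/- Let P be a finite ranked poset, p a minimal element of P, and P' = {q ∈ P : q ≱ p}. For any antichain A of P: if A ⊆ P', then Rvac_P(A) = {p} ∪ Rvac_{P'}(A); and if p ∈ A, then Rvac_P(A) = Rvac_{P'}(A \ {p}). -/

import Mathlib

open scoped Classical

variable {α : Type*}

noncomputable def toggle [PartialOrder α] (p : α) (A : Finset α) : Finset α :=
  if p ∈ A then A.erase p
  else if IsAntichain (· ≤ ·) (↑(insert p A) : Set α) then insert p A
  else A

noncomputable def rowmotion [Fintype α] [PartialOrder α] (A : Finset α) : Finset α :=
  Finset.univ.filter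
    (fun x => (∀ y ∈ A, ¬ x ≤ y) ∧ ∀ z : α, (∀ y ∈ A, ¬ z ≤ y) → z ≤ x → z = x)

noncomputable def rankToggle [Fintype α] [PartialOrder α] (rk : α → ℕ) (i : ℕ)
    (A : Finset α) : Finset α :=
  (Finset.univ.filter (fun p => rk p = i)).toList.foldr toggle A

noncomputable def rvac [Fintype α] [PartialOrder α] (rk : α → ℕ) (N : ℕ)
    (A : Finset α) : Finset α :=
  (List.range (N + 1)).foldl
    (fun B k => (List.range' k (N + 1 - k)).foldl (fun C j => rankToggle rk j C) B) A

def IsRankFunction [PartialOrder α] (rk : α → ℕ) : Prop :=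
  (∀ p : α, (∀ q : α, ¬ q < p) → rk p = 0) ∧ ∀ x y : α, x ⋖ y → rk y = rk x + 1

noncomputable def rankToggleOn [Fintype α] [PartialOrder α] (s : Set α)
    (rk : α → ℕ) (i : ℕ) (A : Finset α) : Finset α :=
  (Finset.univ.filter (fun p => p ∈ s ∧ rk p = i)).toList.foldr toggle A

noncomputable def rvacOn [Fintype α] [PartialOrder α] (s : Set α) (rk : α → ℕ)
    (N : ℕ) (A : Finset α) : Finset α :=
  (List.range (N + 1)).foldl
    (fun B k => (List.range' k (N + 1 - k)).foldl
      (fun C j => rankToggleOn s rk j C) B) A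

noncomputable def rowmotionOn [Fintype α] [PartialOrder α] (s : Set α)
    (A : Finset α) : Finset α :=
  Finset.univ.filter
    (fun x => x ∈ s ∧ (∀ y ∈ A, ¬ x ≤ y) ∧
      ∀ z ∈ s, (∀ y ∈ A, ¬ z ≤ y) → z ≤ x → z = x)

/-
Every element of `P' = {q | ¬ p ≤ q}` is incomparable with `p`, and the toggles of one rank
commute, so a rank toggle of `P` moves the `P'`-part `Y` of an antichain exactly as the rank
toggle of `P'` does, as long as the part above `p` lies in ranks not above the toggled one.
Along the toggle sequence of rowvacuation the part above `p` is always either empty or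
`addableAbove p rk r Y`, the rank-`r` elements above `p` lying strictly above no element of `Y`:
toggling rank `r` removes it, toggling rank `j` creates it when it is empty (with `r = j`), and
toggles at ranks above `r` leave it unchanged. From `A ⊆ P'` the very first toggle adds
`addableAbove p rk 0 Y = {p}`, which then stays; from `p ∈ A` each block `k, …, N` of
rowvacuation turns the part at rank `k` into the part at rank `k + 1`, empty after the last block.
-/

section Toggle

variable [PartialOrder α] {A : Finset α}

theorem isAntichain_toggle (hA : IsAntichain (· ≤ ·) (A : Set α)) (x : α) :
    IsAntichain (· ≤ ·) (↑(toggle x A) : Set α) := by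
  unfold toggle
  split_ifs with hx hins
  · exact hA.subset (by simp)
  · exact hins
  · exact hA

theorem mem_toggle (hA : IsAntichain (· ≤ ·) (A : Set α)) {x z : α} :
    z ∈ toggle x A ↔ if z = x then ∀ a ∈ A, ¬ x ≤ a ∧ ¬ a ≤ x else z ∈ A := by
  have hins : IsAntichain (· ≤ ·) (↑(insert x A) : Set α) ↔
      ∀ a ∈ A, a ≠ x → ¬ x ≤ a ∧ ¬ a ≤ x := by
    rw [Finset.coe_insert, isAntichain_insert]
    exact ⟨fun h a ha hax => h.2 ha hax.symm,
      fun h => ⟨hA, fun a ha hxa => h a ha hxa.symm⟩⟩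
  unfold toggle
  by_cases hxA : x ∈ A
  · simp only [hxA, if_true, Finset.mem_erase]
    split_ifs with hzx
    · simp only [hzx, ne_eq, not_true_eq_false, false_and, false_iff]
      exact fun h => (h x hxA).1 le_rfl
    · simp [hzx]
  · have hne : ∀ a ∈ A, a ≠ x := fun a ha hax => hxA (hax ▸ ha)
    simp only [hxA, if_false, hins]
    split_ifs with hanti hzx hzx
    · simpa [hzx] using fun a ha => hanti a ha (hne a ha)
    · simp [hzx]
    · simp only [hzx, hxA, false_iff]
      exact fun h => hanti fun a ha _ => h a ha
    · rfl

theorem isAntichain_foldr_toggle (hA : IsAntichain (· ≤ ·) (A : Set α)) (L : List α) :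
    IsAntichain (· ≤ ·) (↑(L.foldr toggle A) : Set α) := by
  induction L with
  | nil => exact hA
  | cons x L ih => exact isAntichain_toggle ih x

theorem mem_foldr_toggle (hA : IsAntichain (· ≤ ·) (A : Set α)) {L : List α} (hL : L.Nodup)
    (hLa : IsAntichain (· ≤ ·) {x | x ∈ L}) (z : α) :
    z ∈ L.foldr toggle A ↔
      if z ∈ L then ∀ a ∈ A, ¬ z ≤ a ∧ ¬ a ≤ z else z ∈ A := by
  induction L generalizing z with
  | nil => simp
  | cons x L ih =>
    obtain ⟨hxL, hLn⟩ := List.nodup_cons.mp hL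
    have hLa' : IsAntichain (· ≤ ·) {x | x ∈ L} :=
      hLa.subset fun y hy => List.mem_cons_of_mem x hy
    have hxy : ∀ y ∈ L, ¬ x ≤ y ∧ ¬ y ≤ x := fun y hy =>
      ⟨hLa List.mem_cons_self (List.mem_cons_of_mem x hy) (fun h => hxL (h ▸ hy)),
        hLa (List.mem_cons_of_mem x hy) List.mem_cons_self (fun h => hxL (h ▸ hy))⟩
    rw [List.foldr_cons, mem_toggle (isAntichain_foldr_toggle hA L)]
    by_cases hzx : z = x
    · subst hzx
      simp only [if_true, List.mem_cons_self]
      constructor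
      · intro h a ha
        by_cases haL : a ∈ L
        · exact hxy a haL
        · exact h a ((ih hLn hLa' a).mpr (by simpa [haL] using ha))
      · intro h b hb
        rw [ih hLn hLa' b] at hb
        split_ifs at hb with hbL
        · exact hxy b hbL
        · exact h b hb
    · simp [hzx, ih hLn hLa' z]

end Toggle

theorem not_le_of_rank_eq [PartialOrder α] {rk : α → ℕ} (hrk : StrictMono rk) {x y : α}
    (hne : x ≠ y) (h : rk x = rk y) : ¬ x ≤ y :=
  fun hle => (hrk (hle.lt_of_ne hne)).ne h

section Rank

variable [Fintype α] [PartialOrder α] {rk : α → ℕ}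

theorem strictMono_of_covBy_add_one (hcov : ∀ x y : α, x ⋖ y → rk y = rk x + 1) :
    StrictMono rk := by
  intro x y hxy
  induction y using WellFoundedLT.induction with
  | _ y ih =>
    obtain ⟨z, hxz, hzy⟩ := exists_le_covBy_of_lt hxy
    have hz := hcov z y hzy
    rcases hxz.eq_or_lt with rfl | hxz
    · omega
    · have := ih z hzy.lt hxz
      omega

theorem exists_rank_eq_of_covBy_add_one (hcov : ∀ x y : α, x ⋖ y → rk y = rk x + 1)
    {a b : α} (hab : a ≤ b) {i : ℕ} (hai : rk a ≤ i) (hib : i ≤ rk b) :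
    ∃ x, a ≤ x ∧ x ≤ b ∧ rk x = i := by
  induction b using WellFoundedLT.induction with
  | _ b ih =>
    rcases hib.eq_or_lt with hib | hib
    · exact ⟨b, hab, le_rfl, hib.symm⟩
    · obtain ⟨z, haz, hzb⟩ := exists_le_covBy_of_lt (hab.lt_of_ne (by rintro rfl; omega))
      obtain ⟨x, hax, hxz, hx⟩ := ih z hzb.lt haz (by have := hcov z b hzb; omega)
      exact ⟨x, hax, hxz.trans hzb.le, hx⟩

variable {A : Finset α} {s : Set α} {j : ℕ}

theorem isAntichain_rankToggleOn (hA : IsAntichain (· ≤ ·) (A : Set α)) :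
    IsAntichain (· ≤ ·) (↑(rankToggleOn s rk j A) : Set α) :=
  isAntichain_foldr_toggle hA _

theorem mem_rankToggleOn (hrk : StrictMono rk) (hA : IsAntichain (· ≤ ·) (A : Set α))
    {z : α} :
    z ∈ rankToggleOn s rk j A ↔
      if z ∈ s ∧ rk z = j then ∀ a ∈ A, ¬ z ≤ a ∧ ¬ a ≤ z else z ∈ A := by
  rw [rankToggleOn, mem_foldr_toggle hA (Finset.nodup_toList _)]
  · simp
  · intro x hx y hy hxy
    simp only [Finset.mem_toList, Finset.mem_filter, Set.mem_ofPred_eq] at hx hy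
    exact not_le_of_rank_eq hrk hxy (hx.2.2.trans hy.2.2.symm)

theorem rankToggleOn_mem_iff_of_rank_ne (hrk : StrictMono rk)
    (hA : IsAntichain (· ≤ ·) (A : Set α)) {z : α} (hz : rk z ≠ j) :
    z ∈ rankToggleOn s rk j A ↔ z ∈ A := by
  simp [mem_rankToggleOn hrk hA, hz]

theorem coe_rankToggleOn_subset (hrk : StrictMono rk) (hA : IsAntichain (· ≤ ·) (A : Set α))
    (hAs : (A : Set α) ⊆ s) : (↑(rankToggleOn s rk j A) : Set α) ⊆ s := by
  intro z hz
  rw [Finset.mem_coe, mem_rankToggleOn hrk hA] at hz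
  split_ifs at hz with hzs
  · exact hzs.1
  · exact hAs hz

end Rank

theorem incomp_iff_not_lt_of_not_le_of_le [PartialOrder α] {p y z : α} (hy : ¬ p ≤ y)
    (hz : p ≤ z) : (¬ z ≤ y ∧ ¬ y ≤ z) ↔ ¬ y < z := by
  have hyz : y ≠ z := by rintro rfl; exact hy hz
  rw [lt_iff_le_and_ne]
  exact ⟨fun h h' => h.2 h'.1,
    fun h => ⟨fun h' => hy (hz.trans h'), fun h' => h ⟨h', hyz⟩⟩⟩

noncomputable def addableAbove [Fintype α] [PartialOrder α] (p : α) (rk : α → ℕ) (r : ℕ)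
    (Y : Finset α) : Finset α :=
  Finset.univ.filter fun f => p ≤ f ∧ rk f = r ∧ ∀ y ∈ Y, ¬ y < f

section Parabolic

variable [Fintype α] [PartialOrder α] {rk : α → ℕ} {p : α} {Y : Finset α} {r j : ℕ}

@[simp] theorem mem_addableAbove {f : α} :
    f ∈ addableAbove p rk r Y ↔ p ≤ f ∧ rk f = r ∧ ∀ y ∈ Y, ¬ y < f := by
  simp [addableAbove]

theorem addableAbove_rankToggleOn (hrk : StrictMono rk) (hY : IsAntichain (· ≤ ·) (Y : Set α))
    (s : Set α) (hrj : r ≤ j) :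
    addableAbove p rk r (rankToggleOn s rk j Y) = addableAbove p rk r Y := by
  ext f
  simp only [mem_addableAbove, and_congr_right_iff]
  intro _ hf
  refine forall_congr' fun y => ?_
  by_cases hyf : y < f
  · have hy : rk y ≠ j := by have := hrk hyf; omega
    rw [rankToggleOn_mem_iff_of_rank_ne hrk hY hy]
  · simp [hyf]

theorem addableAbove_zero (hrk : StrictMono rk) (hp0 : rk p = 0) : addableAbove p rk 0 Y = {p} := by
  ext f
  simp only [mem_addableAbove, Finset.mem_singleton]
  constructor
  · rintro ⟨hpf, hf, -⟩
    by_contra hfp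
    have := hrk (hpf.lt_of_ne (Ne.symm hfp))
    omega
  · rintro rfl
    exact ⟨le_rfl, hp0, fun y _ hy => by have := hrk hy; omega⟩

theorem addableAbove_eq_empty {N : ℕ} (hN : ∀ q, rk q ≤ N) (hr : N < r) :
    addableAbove p rk r Y = ∅ := by
  ext f
  simp only [mem_addableAbove, Finset.notMem_empty, iff_false]
  have := hN f
  omega

theorem isAntichain_union_addableAbove (hrk : StrictMono rk)
    (hY : IsAntichain (· ≤ ·) (Y : Set α)) (hYp : (Y : Set α) ⊆ {q | ¬ p ≤ q}) :
    IsAntichain (· ≤ ·) (↑(Y ∪ addableAbove p rk r Y) : Set α) := by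
  rw [Finset.coe_union, isAntichain_union]
  refine ⟨hY, ?_, ?_⟩
  · intro a ha b hb hab
    simp only [Finset.mem_coe, mem_addableAbove] at ha hb
    exact not_le_of_rank_eq hrk hab (ha.2.1.trans hb.2.1.symm)
  · intro y hy f hf _
    simp only [Finset.mem_coe, mem_addableAbove] at hf
    have := (incomp_iff_not_lt_of_not_le_of_le (hYp hy) hf.1).mpr (hf.2.2 y hy)
    exact ⟨this.2, this.1⟩

theorem rankToggleOn_univ_eq_union_addableAbove (hrk : StrictMono rk)
    (hY : IsAntichain (· ≤ ·) (Y : Set α)) (hYp : (Y : Set α) ⊆ {q | ¬ p ≤ q}) :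
    rankToggleOn Set.univ rk j Y =
      rankToggleOn {q | ¬ p ≤ q} rk j Y ∪ addableAbove p rk j Y := by
  ext z
  rw [Finset.mem_union, mem_rankToggleOn hrk hY, mem_rankToggleOn hrk hY, mem_addableAbove]
  by_cases hz : rk z = j
  · by_cases hpz : p ≤ z
    · have hzY : z ∉ Y := fun h => hYp h hpz
      simp only [Set.mem_univ, Set.mem_ofPred_eq, hz, hpz, hzY, true_and, not_true_eq_false,
        false_and, if_true, if_false, false_or]
      exact forall₂_congr fun y hy => incomp_iff_not_lt_of_not_le_of_le (hYp hy) hpz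
    · simp [hz, hpz]
  · simp [hz]

theorem rankToggleOn_univ_union_addableAbove_self (hrk : StrictMono rk)
    (hY : IsAntichain (· ≤ ·) (Y : Set α)) (hYp : (Y : Set α) ⊆ {q | ¬ p ≤ q}) :
    rankToggleOn Set.univ rk j (Y ∪ addableAbove p rk j Y) =
      rankToggleOn {q | ¬ p ≤ q} rk j Y := by
  ext z
  rw [mem_rankToggleOn hrk (isAntichain_union_addableAbove hrk hY hYp), mem_rankToggleOn hrk hY,
    Finset.forall_mem_union]
  by_cases hz : rk z = j
  · by_cases hpz : p ≤ z
    · have hzY : z ∉ Y := fun h => hYp h hpz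
      simp only [Set.mem_univ, Set.mem_ofPred_eq, hz, hpz, hzY, true_and, not_true_eq_false,
        false_and, if_true, if_false, iff_false, not_and]
      intro hYz hMz
      by_cases hfree : ∀ y ∈ Y, ¬ y < z
      · exact (hMz z (mem_addableAbove.mpr ⟨hpz, hz, hfree⟩)).1 le_rfl
      · push Not at hfree
        obtain ⟨y, hy, hyz⟩ := hfree
        exact (hYz y hy).2 hyz.le
    · simp only [Set.mem_univ, Set.mem_ofPred_eq, hz, hpz, true_and, not_false_eq_true,
        if_true, and_iff_left_iff_imp]
      intro _ a ha
      rw [mem_addableAbove] at ha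
      have hza : z ≠ a := by rintro rfl; exact hpz ha.1
      exact ⟨not_le_of_rank_eq hrk hza (hz.trans ha.2.1.symm),
        not_le_of_rank_eq hrk hza.symm (ha.2.1.trans hz.symm)⟩
  · simp [hz]

theorem rankToggleOn_univ_union_addableAbove_of_lt
    (hcov : ∀ x y : α, x ⋖ y → rk y = rk x + 1)
    (hY : IsAntichain (· ≤ ·) (Y : Set α)) (hYp : (Y : Set α) ⊆ {q | ¬ p ≤ q})
    (hpr : rk p ≤ r) (hrj : r < j) :
    rankToggleOn Set.univ rk j (Y ∪ addableAbove p rk r Y) =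
      rankToggleOn {q | ¬ p ≤ q} rk j Y ∪ addableAbove p rk r Y := by
  have hrk := strictMono_of_covBy_add_one hcov
  ext z
  rw [Finset.mem_union, mem_rankToggleOn hrk (isAntichain_union_addableAbove hrk hY hYp),
    mem_rankToggleOn hrk hY, Finset.forall_mem_union, mem_addableAbove]
  by_cases hz : rk z = j
  · have hjr : j ≠ r := by omega
    by_cases hpz : p ≤ z
    · have hzY : z ∉ Y := fun h => hYp h hpz
      simp only [Set.mem_univ, Set.mem_ofPred_eq, hz, hpz, hzY, hjr, true_and, not_true_eq_false,
        false_and, if_true, if_false, and_false, or_false, iff_false, not_and]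
      intro hYz hMz
      -- the rank-`r` element below `z` is either addable or lies above an element of `Y`
      obtain ⟨x, hpx, hxz, hx⟩ := exists_rank_eq_of_covBy_add_one hcov hpz hpr (by omega)
      by_cases hfree : ∀ y ∈ Y, ¬ y < x
      · exact (hMz x (mem_addableAbove.mpr ⟨hpx, hx, hfree⟩)).2 hxz
      · push Not at hfree
        obtain ⟨y, hy, hyx⟩ := hfree
        exact (hYz y hy).2 (hyx.le.trans hxz)
    · simp only [Set.mem_univ, Set.mem_ofPred_eq, hz, hpz, true_and, not_false_eq_true,
        if_true, false_and, or_false, and_iff_left_iff_imp]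
      intro _ a ha
      rw [mem_addableAbove] at ha
      exact ⟨fun hza => by have := hrk.monotone hza; omega, fun haz => hpz (ha.1.trans haz)⟩
  · simp [hz]

end Parabolic

noncomputable def rankTogglesOn [Fintype α] [PartialOrder α] (s : Set α) (rk : α → ℕ)
    (js : List ℕ) (A : Finset α) : Finset α :=
  js.foldl (fun C j => rankToggleOn s rk j C) A

section Sequences

variable [Fintype α] [PartialOrder α] {rk : α → ℕ} {s : Set α} {A : Finset α}

@[simp] theorem rankTogglesOn_nil : rankTogglesOn s rk [] A = A := rfl

@[simp] theorem rankTogglesOn_cons (j : ℕ) (js : List ℕ) :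
    rankTogglesOn s rk (j :: js) A = rankTogglesOn s rk js (rankToggleOn s rk j A) := rfl

theorem rankTogglesOn_append (js js' : List ℕ) :
    rankTogglesOn s rk (js ++ js') A = rankTogglesOn s rk js' (rankTogglesOn s rk js A) :=
  List.foldl_append

theorem rankTogglesOn_flatMap {ι : Type*} (l : List ι) (f : ι → List ℕ) :
    rankTogglesOn s rk (l.flatMap f) A = l.foldl (fun B i => rankTogglesOn s rk (f i) B) A :=
  List.foldl_flatMap

theorem isAntichain_rankTogglesOn (hA : IsAntichain (· ≤ ·) (A : Set α)) (js : List ℕ) :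
    IsAntichain (· ≤ ·) (↑(rankTogglesOn s rk js A) : Set α) := by
  induction js generalizing A with
  | nil => exact hA
  | cons j js ih => exact ih (isAntichain_rankToggleOn hA)

theorem coe_rankTogglesOn_subset (hrk : StrictMono rk) (hA : IsAntichain (· ≤ ·) (A : Set α))
    (hAs : (A : Set α) ⊆ s) (js : List ℕ) : (↑(rankTogglesOn s rk js A) : Set α) ⊆ s := by
  induction js generalizing A with
  | nil => exact hAs
  | cons j js ih =>
    exact ih (isAntichain_rankToggleOn hA) (coe_rankToggleOn_subset hrk hA hAs)

theorem rankTogglesOn_filter_le {M : ℕ} (hM : ∀ q ∈ s, rk q ≤ M) (js : List ℕ) :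
    rankTogglesOn s rk (js.filter (· ≤ M)) A = rankTogglesOn s rk js A := by
  induction js generalizing A with
  | nil => rfl
  | cons j js ih =>
    by_cases hj : j ≤ M
    · simp [hj, ih]
    · have hid : rankToggleOn s rk j A = A := by
        have : Finset.univ.filter (fun q => q ∈ s ∧ rk q = j) = ∅ := by
          ext q
          simp only [Finset.mem_filter, Finset.mem_univ, true_and, Finset.notMem_empty,
            iff_false, not_and]
          intro hq hqj
          exact hj (hqj ▸ hM q hq)
        simp [rankToggleOn, this]
      simp [hj, ih, hid]

end Sequences

section ParabolicSequences

variable [Fintype α] [PartialOrder α] {rk : α → ℕ} {p : α} {Y : Finset α} {N : ℕ}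

theorem rankTogglesOn_univ_union_addableAbove_of_lt
    (hcov : ∀ x y : α, x ⋖ y → rk y = rk x + 1)
    (hY : IsAntichain (· ≤ ·) (Y : Set α)) (hYp : (Y : Set α) ⊆ {q | ¬ p ≤ q})
    {r : ℕ} (hpr : rk p ≤ r) {js : List ℕ} (hjs : ∀ j ∈ js, r < j) :
    rankTogglesOn Set.univ rk js (Y ∪ addableAbove p rk r Y) =
      rankTogglesOn {q | ¬ p ≤ q} rk js Y ∪
        addableAbove p rk r (rankTogglesOn {q | ¬ p ≤ q} rk js Y) := by
  have hrk := strictMono_of_covBy_add_one hcov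
  induction js generalizing Y with
  | nil => rfl
  | cons j js ih =>
    have hrj := hjs j List.mem_cons_self
    rw [rankTogglesOn_cons, rankTogglesOn_cons,
      rankToggleOn_univ_union_addableAbove_of_lt hcov hY hYp hpr hrj,
      ← addableAbove_rankToggleOn hrk hY _ hrj.le]
    exact ih (isAntichain_rankToggleOn hY) (coe_rankToggleOn_subset hrk hY hYp)
      fun i hi => hjs i (List.mem_cons_of_mem j hi)

theorem rankTogglesOn_univ_range' (hcov : ∀ x y : α, x ⋖ y → rk y = rk x + 1)
    (hN : ∀ q, rk q ≤ N) (hY : IsAntichain (· ≤ ·) (Y : Set α))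
    (hYp : (Y : Set α) ⊆ {q | ¬ p ≤ q}) {j : ℕ} (hpj : rk p ≤ j) :
    rankTogglesOn Set.univ rk (List.range' j (N + 1 - j)) Y =
      rankTogglesOn {q | ¬ p ≤ q} rk (List.range' j (N + 1 - j)) Y ∪
        addableAbove p rk j (rankTogglesOn {q | ¬ p ≤ q} rk (List.range' j (N + 1 - j)) Y) := by
  have hrk := strictMono_of_covBy_add_one hcov
  rcases Nat.lt_or_ge N j with hNj | hjN
  · simp [Nat.sub_eq_zero_of_le hNj, addableAbove_eq_empty hN hNj]
  · rw [show N + 1 - j = (N - j) + 1 by omega, List.range'_succ, rankTogglesOn_cons,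
      rankTogglesOn_cons, rankToggleOn_univ_eq_union_addableAbove hrk hY hYp,
      ← addableAbove_rankToggleOn hrk hY _ le_rfl]
    exact rankTogglesOn_univ_union_addableAbove_of_lt hcov (isAntichain_rankToggleOn hY)
      (coe_rankToggleOn_subset hrk hY hYp) hpj fun i hi => by
        simp only [List.mem_range'_1] at hi
        omega

theorem rankTogglesOn_univ_range'_union_addableAbove
    (hcov : ∀ x y : α, x ⋖ y → rk y = rk x + 1) (hN : ∀ q, rk q ≤ N)
    (hY : IsAntichain (· ≤ ·) (Y : Set α)) (hYp : (Y : Set α) ⊆ {q | ¬ p ≤ q})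
    {k : ℕ} (hpk : rk p ≤ k) :
    rankTogglesOn Set.univ rk (List.range' k (N + 1 - k)) (Y ∪ addableAbove p rk k Y) =
      rankTogglesOn {q | ¬ p ≤ q} rk (List.range' k (N + 1 - k)) Y ∪
        addableAbove p rk (k + 1)
          (rankTogglesOn {q | ¬ p ≤ q} rk (List.range' k (N + 1 - k)) Y) := by
  have hrk := strictMono_of_covBy_add_one hcov
  rcases Nat.lt_or_ge N k with hNk | hkN
  · simp [Nat.sub_eq_zero_of_le hNk, addableAbove_eq_empty hN hNk,
      addableAbove_eq_empty hN (hNk.trans (Nat.lt_succ_self k))]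
  · rw [show N + 1 - k = (N + 1 - (k + 1)) + 1 by omega, List.range'_succ, rankTogglesOn_cons,
      rankTogglesOn_cons, rankToggleOn_univ_union_addableAbove_self hrk hY hYp]
    exact rankTogglesOn_univ_range' hcov hN (isAntichain_rankToggleOn hY)
      (coe_rankToggleOn_subset hrk hY hYp) (hpk.trans k.le_succ)

end ParabolicSequences

def rvacRanks (N : ℕ) : List ℕ :=
  (List.range (N + 1)).flatMap fun k => List.range' k (N + 1 - k)

theorem rvacOn_eq_rankTogglesOn [Fintype α] [PartialOrder α] (s : Set α) (rk : α → ℕ)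
    (N : ℕ) (A : Finset α) : rvacOn s rk N A = rankTogglesOn s rk (rvacRanks N) A :=
  (rankTogglesOn_flatMap _ _).symm

theorem rvacRanks_eq_range'_append (N : ℕ) :
    rvacRanks N = List.range' 0 (N + 1) ++
      (List.range' 1 N).flatMap fun k => List.range' k (N + 1 - k) := by
  rw [rvacRanks, List.range_eq_range', List.range'_succ, List.flatMap_cons]
  rfl

theorem rvacRanks_filter_le {M N : ℕ} (hMN : M ≤ N) :
    (rvacRanks N).filter (· ≤ M) = rvacRanks M := by
  have hblock (k : ℕ) :
      (List.range' k (N + 1 - k)).filter (· ≤ M) = List.range' k (M + 1 - k) := by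
    rcases Nat.lt_or_ge M k with hMk | hkM
    · rw [Nat.sub_eq_zero_of_le hMk, List.range'_zero, List.filter_eq_nil_iff]
      simp only [List.mem_range'_1, decide_eq_true_eq]
      omega
    · rw [show N + 1 - k = (M + 1 - k) + (N - M) by omega, ← List.range'_append_1,
        List.filter_append, List.filter_eq_self.mpr, List.filter_eq_nil_iff.mpr, List.append_nil]
      all_goals simp only [List.mem_range'_1, decide_eq_true_eq]; omega
  rw [rvacRanks, List.filter_flatMap, List.flatMap_congr (fun k _ => hblock k), rvacRanks,
    List.range_eq_range', List.range_eq_range',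
    show N + 1 = (M + 1) + (N - M) by omega, ← List.range'_append_1, List.flatMap_append]
  rw [List.append_right_eq_self, List.flatMap_eq_nil_iff]
  intro k hk
  simp only [List.mem_range'_1] at hk
  simp only [List.range'_eq_nil_iff]
  omega

theorem rvacOn_eq_of_le [Fintype α] [PartialOrder α] {s : Set α} {rk : α → ℕ} {M N : ℕ}
    (hM : ∀ q ∈ s, rk q ≤ M) (hMN : M ≤ N) (A : Finset α) :
    rvacOn s rk N A = rvacOn s rk M A := by
  rw [rvacOn_eq_rankTogglesOn, rvacOn_eq_rankTogglesOn, ← rvacRanks_filter_le hMN,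
    rankTogglesOn_filter_le hM]

section ParabolicRvac

variable [Fintype α] [PartialOrder α] {rk : α → ℕ} {p : α} {Y : Finset α} {N : ℕ}

theorem rvacOn_univ_eq_insert (hcov : ∀ x y : α, x ⋖ y → rk y = rk x + 1) (hp0 : rk p = 0)
    (hN : ∀ q, rk q ≤ N) (hY : IsAntichain (· ≤ ·) (Y : Set α))
    (hYp : (Y : Set α) ⊆ {q | ¬ p ≤ q}) :
    rvacOn Set.univ rk N Y = insert p (rvacOn {q | ¬ p ≤ q} rk N Y) := by
  have hrk := strictMono_of_covBy_add_one hcov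
  have hfirst := rankTogglesOn_univ_range' hcov hN hY hYp hp0.le
  rw [Nat.sub_zero] at hfirst
  rw [rvacOn_eq_rankTogglesOn, rvacOn_eq_rankTogglesOn, rvacRanks_eq_range'_append,
    rankTogglesOn_append, rankTogglesOn_append, hfirst,
    rankTogglesOn_univ_union_addableAbove_of_lt hcov (isAntichain_rankTogglesOn hY _)
      (coe_rankTogglesOn_subset hrk hY hYp _) hp0.le, addableAbove_zero hrk hp0,
    Finset.union_singleton]
  intro j hj
  simp only [List.mem_flatMap, List.mem_range'_1] at hj
  omega

theorem foldl_rankTogglesOn_univ_union_addableAbove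
    (hcov : ∀ x y : α, x ⋖ y → rk y = rk x + 1) (hN : ∀ q, rk q ≤ N)
    (hY : IsAntichain (· ≤ ·) (Y : Set α)) (hYp : (Y : Set α) ⊆ {q | ¬ p ≤ q})
    {k : ℕ} (hpk : rk p ≤ k) (n : ℕ) :
    (List.range' k n).foldl (fun B i => rankTogglesOn Set.univ rk (List.range' i (N + 1 - i)) B)
        (Y ∪ addableAbove p rk k Y) =
      (List.range' k n).foldl
          (fun B i => rankTogglesOn {q | ¬ p ≤ q} rk (List.range' i (N + 1 - i)) B) Y ∪
        addableAbove p rk (k + n) ((List.range' k n).foldl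
          (fun B i => rankTogglesOn {q | ¬ p ≤ q} rk (List.range' i (N + 1 - i)) B) Y) := by
  have hrk := strictMono_of_covBy_add_one hcov
  induction n generalizing k Y with
  | zero => rfl
  | succ n ih =>
    rw [List.range'_succ, List.foldl_cons, List.foldl_cons,
      rankTogglesOn_univ_range'_union_addableAbove hcov hN hY hYp hpk,
      ih (isAntichain_rankTogglesOn hY _) (coe_rankTogglesOn_subset hrk hY hYp _)
        (hpk.trans (Nat.le_add_right k 1)), show k + 1 + n = k + (n + 1) by omega]

theorem rvacOn_univ_insert (hcov : ∀ x y : α, x ⋖ y → rk y = rk x + 1) (hp0 : rk p = 0)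
    (hN : ∀ q, rk q ≤ N) (hY : IsAntichain (· ≤ ·) (Y : Set α))
    (hYp : (Y : Set α) ⊆ {q | ¬ p ≤ q}) :
    rvacOn Set.univ rk N (insert p Y) = rvacOn {q | ¬ p ≤ q} rk N Y := by
  have hrk := strictMono_of_covBy_add_one hcov
  rw [rvacOn_eq_rankTogglesOn, rvacOn_eq_rankTogglesOn, rvacRanks, List.range_eq_range',
    rankTogglesOn_flatMap, rankTogglesOn_flatMap, ← Finset.union_singleton,
    ← addableAbove_zero hrk hp0 (Y := Y),
    foldl_rankTogglesOn_univ_union_addableAbove hcov hN hY hYp hp0.le,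
    addableAbove_eq_empty hN (by omega), Finset.union_empty]

end ParabolicRvac

/-- `rvacOn {q | ¬ p ≤ q}` is rowvacuation of the subposet `P'`, whose rank function is the
restriction of `rk` and whose rank is the maximum of `rk` over `P'`. -/
theorem rvac_parabolic [Fintype α] [PartialOrder α] (rk : α → ℕ)
    (hrk : IsRankFunction rk) (p : α) (hp : ∀ q : α, ¬ q < p)
    (A : Finset α) (hA : IsAntichain (· ≤ ·) (↑A : Set α)) :
    ((↑A : Set α) ⊆ {q : α | ¬ p ≤ q} →
      rvacOn Set.univ rk (Finset.univ.sup rk) A =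
        insert p (rvacOn {q : α | ¬ p ≤ q} rk
          ((Finset.univ.filter (fun q : α => ¬ p ≤ q)).sup rk) A)) ∧
    (p ∈ A →
      rvacOn Set.univ rk (Finset.univ.sup rk) A =
        rvacOn {q : α | ¬ p ≤ q} rk
          ((Finset.univ.filter (fun q : α => ¬ p ≤ q)).sup rk) (A.erase p)) := by
  have hp0 : rk p = 0 := hrk.1 p hp
  have hN : ∀ q, rk q ≤ Finset.univ.sup rk := fun q => Finset.le_sup (Finset.mem_univ q)
  have hrestrict (D : Finset α) : rvacOn {q : α | ¬ p ≤ q} rk (Finset.univ.sup rk) D =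
      rvacOn {q : α | ¬ p ≤ q} rk ((Finset.univ.filter (fun q : α => ¬ p ≤ q)).sup rk) D :=
    rvacOn_eq_of_le (fun q hq => Finset.le_sup (Finset.mem_filter.mpr ⟨Finset.mem_univ q, hq⟩))
      (Finset.sup_mono (Finset.filter_subset _ _)) D
  refine ⟨fun hAp => ?_, fun hpA => ?_⟩
  · rw [rvacOn_univ_eq_insert hrk.2 hp0 hN hA hAp, hrestrict]
  · have hD : IsAntichain (· ≤ ·) (↑(A.erase p) : Set α) :=
      hA.subset (Finset.coe_subset.mpr (Finset.erase_subset p A))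
    have hDp : (↑(A.erase p) : Set α) ⊆ {q | ¬ p ≤ q} := fun y hy =>
      hA hpA (Finset.mem_of_mem_erase hy) (Finset.ne_of_mem_erase hy).symm
    have h := rvacOn_univ_insert hrk.2 hp0 hN hD hDp
    rw [Finset.insert_erase hpA] at h
    rw [h, hrestrict]
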